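/- arXiv:2602.23573 — 7 statements merged into one kernel-verified Lean document; each statement's English description precedes it below -/
import Mathlib

section
/- For every integer k ≥ 4 and every real number c with 1 < c < k, there exists a real number a > 0 such that c is the unique global minimizer on (0, ∞) of the function g_{a,k}(x) = (a/x + 1/x^k)·e^x; that is, g_{a,k}(c) ≤ g_{a,k}(x) for all x > 0, with equality only at x = c. -/
/-- `g a k x = (a/x + 1/x^k) * e^x`, the leading constant of the expected runtime. -/
noncomputable def hpjG (a : ℝ) (k : ℕ) (x : ℝ) : ℝ := (a / x + 1 / x ^ k) * Real.exp x

/-!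
Write `k = n + 1`. The derivative of `hpjG a k` is `exp x / x ^ (n + 2)` times
`a x ^ n (x - 1) + x - k`, which is strictly increasing on `[1, ∞)` and negative on `(0, 1]`
when `a ≥ 0`. Choosing `a = (k - c) / (c ^ n (c - 1)) > 0` makes `c` its unique root, so `hpjG a k`
strictly decreases on `(0, c]` and strictly increases on `[c, ∞)`.
-/

open Real Set

lemma lt_of_hasDerivAt_of_sign {f f' : ℝ → ℝ} {c : ℝ} (hc : 0 < c)
    (hf : ∀ x, 0 < x → HasDerivAt f (f' x) x)
    (hneg : ∀ x, 0 < x → x < c → f' x < 0) (hpos : ∀ x, c < x → 0 < f' x)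
    {x : ℝ} (hx : 0 < x) (hxc : x ≠ c) : f c < f x := by
  have hcont : ContinuousOn f (Ioi 0) := fun y hy => (hf y hy).continuousAt.continuousWithinAt
  rcases hxc.lt_or_gt with hlt | hgt
  · refine strictAntiOn_of_hasDerivWithinAt_neg (convex_Ioc 0 c) (hcont.mono Ioc_subset_Ioi_self)
      (fun y hy => (hf y ?_).hasDerivWithinAt) (fun y hy => hneg y ?_ ?_)
      ⟨hx, hlt.le⟩ ⟨hc, le_rfl⟩ hlt
    all_goals rw [interior_Ioc] at hy
    exacts [hy.1, hy.1, hy.2]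
  · refine strictMonoOn_of_hasDerivWithinAt_pos (convex_Ici c)
      (hcont.mono fun y hy => hc.trans_le hy) (fun y hy => (hf y ?_).hasDerivWithinAt)
      (fun y hy => hpos y ?_) self_mem_Ici hgt.le hgt
    all_goals rw [interior_Ici] at hy
    exacts [hc.trans hy, hy]

lemma strictMonoOn_pow_mul_sub_one (n : ℕ) :
    StrictMonoOn (fun x : ℝ => x ^ n * (x - 1)) (Ici 1) := by
  intro u hu v hv huv
  have hu0 : 0 ≤ u - 1 := sub_nonneg.2 hu
  calc u ^ n * (u - 1) ≤ v ^ n * (u - 1) :=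
        mul_le_mul_of_nonneg_right (pow_le_pow_left₀ (by linarith [mem_Ici.1 hu]) huv.le n) hu0
    _ < v ^ n * (v - 1) :=
        mul_lt_mul_of_pos_left (by linarith) (pow_pos (by linarith [mem_Ici.1 hv]) n)

def hpjNumer (a : ℝ) (n : ℕ) (x : ℝ) : ℝ := a * x ^ n * (x - 1) + x - (n + 1)

lemma hasDerivAt_hpjG_succ (a : ℝ) (n : ℕ) {x : ℝ} (hx : 0 < x) :
    HasDerivAt (hpjG a (n + 1)) (exp x * hpjNumer a n x / x ^ (n + 2)) x := by
  have h := (((hasDerivAt_inv hx.ne').const_mul a).add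
    ((hasDerivAt_pow (n + 1) x).fun_inv (pow_ne_zero _ hx.ne'))).mul (hasDerivAt_exp x)
  refine (h.congr_deriv ?_).congr_of_eventuallyEq (.of_eq ?_)
  · simp only [Pi.add_apply, hpjNumer, Nat.add_sub_cancel]
    push_cast
    field_simp
    ring
  · funext y
    simp only [hpjG, Pi.mul_apply, Pi.add_apply, div_eq_mul_inv, one_mul]

lemma hpjNumer_root (n : ℕ) {c : ℝ} (hc : 1 < c) :
    hpjNumer ((n + 1 - c) / (c ^ n * (c - 1))) n c = 0 := by
  have hc0 : c ^ n ≠ 0 := (pow_pos (by linarith) n).ne'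
  have hc1 : c - 1 ≠ 0 := sub_ne_zero.2 hc.ne'
  simp only [hpjNumer]
  field_simp
  ring

variable {a : ℝ} {n : ℕ}

lemma strictMonoOn_hpjNumer (ha : 0 ≤ a) : StrictMonoOn (hpjNumer a n) (Ici 1) := by
  intro u hu v hv huv
  have := (strictMonoOn_pow_mul_sub_one n).monotoneOn hu hv huv.le
  simp only [hpjNumer, mul_assoc]
  nlinarith

lemma hpjNumer_le_hpjNumer_one (ha : 0 ≤ a) {x : ℝ} (hx0 : 0 ≤ x) (hx1 : x ≤ 1) :
    hpjNumer a n x ≤ hpjNumer a n 1 := by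
  have : a * x ^ n * (x - 1) ≤ 0 :=
    mul_nonpos_of_nonneg_of_nonpos (by positivity) (by linarith)
  simp only [hpjNumer]
  linarith

lemma hpjNumer_neg_of_lt (ha : 0 ≤ a) {c : ℝ} (hc : 1 < c) (hroot : hpjNumer a n c = 0)
    {x : ℝ} (hx : 0 < x) (hxc : x < c) : hpjNumer a n x < 0 := by
  have hmono := strictMonoOn_hpjNumer (n := n) ha
  rcases le_or_gt x 1 with hx1 | hx1
  · calc hpjNumer a n x ≤ hpjNumer a n 1 := hpjNumer_le_hpjNumer_one ha hx.le hx1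
      _ < hpjNumer a n c := hmono self_mem_Ici hc.le hc
      _ = 0 := hroot
  · exact hroot ▸ hmono hx1.le hc.le hxc

lemma hpjNumer_pos_of_gt (ha : 0 ≤ a) {c : ℝ} (hc : 1 ≤ c) (hroot : hpjNumer a n c = 0)
    {x : ℝ} (hcx : c < x) : 0 < hpjNumer a n x :=
  hroot ▸ strictMonoOn_hpjNumer ha hc (hc.trans hcx.le) hcx

theorem stmt0_general (k : ℕ) (c : ℝ) (hc1 : 1 < c) (hck : c < k) :
    ∃ a : ℝ, 0 < a ∧
      (∀ x : ℝ, 0 < x → hpjG a k c ≤ hpjG a k x) ∧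
      (∀ x : ℝ, 0 < x → hpjG a k x = hpjG a k c → x = c) := by
  obtain ⟨n, rfl⟩ : ∃ n, k = n + 1 :=
    Nat.exists_eq_add_one.2 (by exact_mod_cast zero_lt_one.trans (hc1.trans hck))
  push_cast at hck
  set a := (n + 1 - c) / (c ^ n * (c - 1))
  have ha : 0 < a := div_pos (by linarith) (mul_pos (pow_pos (by linarith) n) (by linarith))
  have hroot : hpjNumer a n c = 0 := hpjNumer_root n hc1
  have hmin : ∀ x, 0 < x → x ≠ c → hpjG a (n + 1) c < hpjG a (n + 1) x :=
    fun x => lt_of_hasDerivAt_of_sign (by linarith) (fun y hy => hasDerivAt_hpjG_succ a n hy)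
      (fun y hy hyc => div_neg_of_neg_of_pos
        (mul_neg_of_pos_of_neg (exp_pos y) (hpjNumer_neg_of_lt ha.le hc1 hroot hy hyc))
        (pow_pos hy _))
      (fun y hcy => div_pos (mul_pos (exp_pos y) (hpjNumer_pos_of_gt ha.le hc1.le hroot hcy))
        (pow_pos (by linarith) _))
  refine ⟨a, ha, fun x hx => ?_, fun x hx heq => ?_⟩
  · rcases eq_or_ne x c with rfl | hxc
    exacts [le_rfl, (hmin x hx hxc).le]
  · by_contra hxc
    exact (hmin x hx hxc).ne' heq

theorem stmt0 (k : ℕ) (hk : 4 ≤ k) (c : ℝ) (hc1 : 1 < c) (hck : c < k) :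
    ∃ a : ℝ, 0 < a ∧
      (∀ x : ℝ, 0 < x → hpjG a k c ≤ hpjG a k x) ∧
      (∀ x : ℝ, 0 < x → hpjG a k x = hpjG a k c → x = c) :=
  stmt0_general k c hc1 hck
end

section
/- Let a > 0 be real and k ≥ 2 an integer, and define q_{a,k}(x) = a·x^k − a·x^{k−1} + x − k. Then q_{a,k} has exactly one zero in (0, ∞), and this zero lies in the open interval (1, ∞). -/
/-- `q a k x = a*x^k - a*x^(k-1) + x - k`. -/
def hpjQ (a : ℝ) (k : ℕ) (x : ℝ) : ℝ := a * x ^ k - a * x ^ (k - 1) + x - k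

lemma hpjQ_eq (a : ℝ) (k : ℕ) (hk : 2 ≤ k) (x : ℝ) :
    hpjQ a k x = a * x ^ (k - 1) * (x - 1) + x - k := by
  have h : x ^ k = x ^ (k - 1) * x := by
    rw [← pow_succ]
    congr 1
    omega
  simp only [hpjQ, h]
  ring

theorem stmt4 (a : ℝ) (ha : 0 < a) (k : ℕ) (hk : 2 ≤ k) :
    ∃ z : ℝ, 1 < z ∧ hpjQ a k z = 0 ∧
      ∀ w : ℝ, 0 < w → hpjQ a k w = 0 → w = z := by
  have hk1 : (1:ℝ) ≤ (k:ℝ) := by exact_mod_cast Nat.one_le_of_lt hk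
  have hcont : ContinuousOn (hpjQ a k) (Set.Icc 1 (k:ℝ)) := by
    apply Continuous.continuousOn
    unfold hpjQ
    continuity
  -- strict mono on [1, ∞)
  have hmono : StrictMonoOn (hpjQ a k) (Set.Ici (1:ℝ)) := by
    intro x hx y hy hxy
    simp only [Set.mem_Ici] at hx hy
    rw [hpjQ_eq a k hk x, hpjQ_eq a k hk y]
    have hpow : x ^ (k-1) ≤ y ^ (k-1) := by
      apply pow_le_pow_left₀ (by linarith) (le_of_lt hxy)
    have hx0 : (0:ℝ) ≤ x ^ (k-1) := by positivity
    have h1 : x ^ (k-1) * (x - 1) ≤ y ^ (k-1) * (y - 1) := by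
      apply mul_le_mul hpow (by linarith) (by linarith)
      nlinarith
    nlinarith
  -- values at endpoints
  have hq1 : hpjQ a k 1 < 0 := by
    rw [hpjQ_eq a k hk]; simp; linarith
  have hqk : 0 < hpjQ a k (k:ℝ) := by
    rw [hpjQ_eq a k hk]
    have hp : (0:ℝ) < (k:ℝ) ^ (k-1) := by positivity
    have hk2 : (2:ℝ) ≤ (k:ℝ) := by exact_mod_cast hk
    nlinarith [mul_pos (mul_pos ha hp) (by linarith : (0:ℝ) < (k:ℝ) - 1)]
  -- IVT
  have := intermediate_value_Icc hk1 hcont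
  have hz : (0:ℝ) ∈ Set.Icc (hpjQ a k 1) (hpjQ a k (k:ℝ)) :=
    ⟨le_of_lt hq1, le_of_lt hqk⟩
  obtain ⟨z, hzmem, hzval⟩ := this hz
  have hz1 : 1 < z := by
    rcases lt_or_eq_of_le hzmem.1 with h | h
    · exact h
    · exfalso; rw [← h] at hzval; linarith
  refine ⟨z, hz1, hzval, ?_⟩
  intro w hw hwval
  have hw1 : 1 < w := by
    by_contra h
    push_neg at h
    have : hpjQ a k w < 0 := by
      rw [hpjQ_eq a k hk]
      have hp : (0:ℝ) ≤ w ^ (k-1) := by positivity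
      have hk2 : (2:ℝ) ≤ (k:ℝ) := by exact_mod_cast hk
      have h2 : a * w ^ (k-1) * (w - 1) ≤ 0 :=
        mul_nonpos_of_nonneg_of_nonpos (by positivity) (by linarith)
      linarith
    linarith
  have := hmono.injOn (Set.mem_Ici.2 hw1.le) (Set.mem_Ici.2 hz1.le)
    (by rw [hwval, hzval])
  exact this
end

section
/- Let a > 0 be real and k ≥ 2 an integer, and let z₀ > 0 satisfy q_{a,k}(z₀) = 0, where q_{a,k}(x) = a·x^k − a·x^{k−1} + x − k. Then z₀ is the unique global minimizer of g_{a,k}(x) = (a/x + 1/x^k)·e^x on (0, ∞): for every x > 0 with x ≠ z₀ one has g_{a,k}(z₀) < g_{a,k}(x). -/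
open Set

theorem apply_lt_apply_of_deriv_sign_change {f f' : ℝ → ℝ} {b z : ℝ} (hbz : b < z)
    (hf : ∀ x, b < x → HasDerivAt f (f' x) x) (hneg : ∀ x ∈ Ioo b z, f' x < 0)
    (hpos : ∀ x, z < x → 0 < f' x) {x : ℝ} (hx : b < x) (hxz : x ≠ z) : f z < f x := by
  have hcont : ContinuousOn f (Ioi b) := fun y hy => (hf y hy).continuousAt.continuousWithinAt
  rcases hxz.lt_or_gt with hlt | hgt
  · have hanti : StrictAntiOn f (Ioc b z) := by
      refine strictAntiOn_of_hasDerivWithinAt_neg (f' := f') (convex_Ioc b z)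
        (hcont.mono Ioc_subset_Ioi_self) (fun y hy => ?_) (fun y hy => ?_)
      · rw [interior_Ioc] at hy
        exact (hf y hy.1).hasDerivWithinAt
      · rw [interior_Ioc] at hy
        exact hneg y hy
    exact hanti ⟨hx, hlt.le⟩ ⟨hbz, le_rfl⟩ hlt
  · have hmono : StrictMonoOn f (Ici z) := by
      refine strictMonoOn_of_hasDerivWithinAt_pos (f' := f') (convex_Ici z)
        (hcont.mono (Ici_subset_Ioi.mpr hbz)) (fun y hy => ?_) (fun y hy => ?_)
      · rw [interior_Ici] at hy
        exact (hf y (hbz.trans hy)).hasDerivWithinAt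
      · rw [interior_Ici] at hy
        exact hpos y hy
    exact hmono (mem_Ici.2 le_rfl) hgt.le hgt

theorem hpjQ_eq_mul_sub_one (a : ℝ) {k : ℕ} (hk : 1 ≤ k) (x : ℝ) :
    hpjQ a k x = a * x ^ (k - 1) * (x - 1) + x - k := by
  obtain ⟨m, rfl⟩ := Nat.exists_eq_add_of_le' hk
  simp only [hpjQ, Nat.add_sub_cancel]
  ring

theorem hpjQ_neg_of_le_one {a : ℝ} (ha : 0 ≤ a) {k : ℕ} (hk : 2 ≤ k) {x : ℝ} (hx₀ : 0 ≤ x)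
    (hx₁ : x ≤ 1) : hpjQ a k x < 0 := by
  have hk' : (2 : ℝ) ≤ k := by exact_mod_cast hk
  have : a * x ^ (k - 1) * (x - 1) ≤ 0 :=
    mul_nonpos_of_nonneg_of_nonpos (by positivity) (by linarith)
  rw [hpjQ_eq_mul_sub_one a (by omega)]
  linarith

theorem hpjQ_strictMonoOn_Ici_one {a : ℝ} (ha : 0 ≤ a) {k : ℕ} (hk : 1 ≤ k) :
    StrictMonoOn (hpjQ a k) (Ici 1) := by
  intro x (hx : 1 ≤ x) y _ hxy
  have : a * x ^ (k - 1) * (x - 1) ≤ a * y ^ (k - 1) * (y - 1) := by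
    have hy : 0 ≤ y := by linarith
    gcongr
  rw [hpjQ_eq_mul_sub_one a hk, hpjQ_eq_mul_sub_one a hk]
  linarith

section Root

variable {a : ℝ} (ha : 0 ≤ a) {k : ℕ} (hk : 2 ≤ k) {z : ℝ} (hz : 0 ≤ z) (hq : hpjQ a k z = 0)
include ha hk hz hq

theorem one_lt_of_hpjQ_eq_zero : 1 < z := by
  by_contra! h
  exact (hpjQ_neg_of_le_one ha hk hz h).ne hq

theorem hpjQ_neg_of_lt_root {x : ℝ} (hx : 0 ≤ x) (hxz : x < z) : hpjQ a k x < 0 := by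
  rcases le_or_gt x 1 with hx₁ | hx₁
  · exact hpjQ_neg_of_le_one ha hk hx hx₁
  · have hz₁ := one_lt_of_hpjQ_eq_zero ha hk hz hq
    have := hpjQ_strictMonoOn_Ici_one ha (k := k) (by omega) hx₁.le hz₁.le hxz
    linarith

theorem hpjQ_pos_of_root_lt {x : ℝ} (hzx : z < x) : 0 < hpjQ a k x := by
  have hz₁ := one_lt_of_hpjQ_eq_zero ha hk hz hq
  have := hpjQ_strictMonoOn_Ici_one ha (k := k) (by omega) hz₁.le (hz₁.trans hzx).le hzx
  linarith

end Root

theorem hasDerivAt_hpjG (a : ℝ) {k : ℕ} (hk : 1 ≤ k) {x : ℝ} (hx : x ≠ 0) :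
    HasDerivAt (hpjG a k) (Real.exp x * hpjQ a k x / x ^ (k + 1)) x := by
  have hfun : hpjG a k = fun y => (a * y⁻¹ + (y ^ k)⁻¹) * Real.exp y := by
    funext y
    simp only [hpjG, div_eq_mul_inv, one_mul]
  rw [hfun]
  refine ((((hasDerivAt_inv hx).const_mul a).add ((hasDerivAt_pow k x).fun_inv
    (pow_ne_zero k hx))).mul (Real.hasDerivAt_exp x)).congr_deriv ?_
  obtain ⟨m, rfl⟩ := Nat.exists_eq_add_of_le' hk
  simp only [hpjQ, Nat.add_sub_cancel, Pi.add_apply]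
  field_simp
  push_cast
  ring

theorem stmt7 (a : ℝ) (ha : 0 < a) (k : ℕ) (hk : 2 ≤ k)
    (z₀ : ℝ) (hz₀ : 0 < z₀) (hq : hpjQ a k z₀ = 0) :
    ∀ x : ℝ, 0 < x → x ≠ z₀ → hpjG a k z₀ < hpjG a k x := by
  intro x hx hxz
  refine apply_lt_apply_of_deriv_sign_change hz₀
    (fun y hy => hasDerivAt_hpjG a (by omega) hy.ne') (fun y hy => ?_) (fun y hy => ?_) hx hxz
  · have := hpjQ_neg_of_lt_root ha.le hk hz₀.le hq hy.1.le hy.2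
    exact div_neg_of_neg_of_pos (mul_neg_of_pos_of_neg (Real.exp_pos y) this)
      (pow_pos hy.1 _)
  · have := hpjQ_pos_of_root_lt ha.le hk hz₀.le hq hy
    have hy₀ : 0 < y := hz₀.trans hy
    positivity
end

section
/- Let a > 0 be real and k ≥ 2 an integer, and let z₀ > 0 satisfy q_{a,k}(z₀) = 0, where q_{a,k}(x) = a·x^k − a·x^{k−1} + x − k. Then q_{a,k}(x) < 0 for every x ∈ (0, z₀) and q_{a,k}(x) > 0 for every x > z₀. -/
lemma hpjQ_key (a : ℝ) (ha : 0 < a) (m : ℕ) (x y : ℝ) (hx : 0 < x) (hxy : x < y)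
    (hy : y ≤ (m : ℝ) + 2) :
    hpjQ a (m + 2) x * y ^ (m + 1) < hpjQ a (m + 2) y * x ^ (m + 1) := by
  have hy0 : 0 < y := hx.trans hxy
  have hP : 0 < x ^ (m + 1) := pow_pos hx _
  have hQ : 0 < y ^ (m + 1) := pow_pos hy0 _
  have hPQ : x ^ (m + 1) < y ^ (m + 1) :=
    pow_lt_pow_left₀ hxy hx.le (Nat.succ_ne_zero m)
  have t1 : 0 < a * x ^ (m + 1) * y ^ (m + 1) * (y - x) :=
    mul_pos (mul_pos (mul_pos ha hP) hQ) (sub_pos.2 hxy)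
  have t2 : 0 ≤ (((m : ℝ) + 2) - y) * (y ^ (m + 1) - x ^ (m + 1)) := by
    apply mul_nonneg <;> linarith
  have t3 : 0 < (y - x) * y ^ (m + 1) := mul_pos (sub_pos.2 hxy) hQ
  simp only [hpjQ]
  push_cast
  have hxp : x ^ (m + 2) = x ^ (m + 1) * x := by ring
  have hyp : y ^ (m + 2) = y ^ (m + 1) * y := by ring
  simp only [Nat.add_sub_cancel, hxp, hyp]
  nlinarith [t1, t2, t3]

lemma hpjQ_pos_of_ge (a : ℝ) (ha : 0 < a) (m : ℕ) (x : ℝ) (hx : (m : ℝ) + 2 ≤ x) :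
    0 < hpjQ a (m + 2) x := by
  have hx1 : 1 < x := by
    have : (0:ℝ) ≤ m := Nat.cast_nonneg m
    linarith
  have hP : 0 < x ^ (m + 1) := pow_pos (by linarith) _
  simp only [hpjQ]
  push_cast
  have hxp : x ^ (m + 2) = x ^ (m + 1) * x := by ring
  simp only [Nat.add_sub_cancel, hxp]
  nlinarith [mul_pos (mul_pos ha hP) (show 0 < x - 1 by linarith)]

theorem stmt8 (a : ℝ) (ha : 0 < a) (k : ℕ) (hk : 2 ≤ k)
    (z₀ : ℝ) (hz₀ : 0 < z₀) (hq : hpjQ a k z₀ = 0) :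
    (∀ x : ℝ, 0 < x → x < z₀ → hpjQ a k x < 0) ∧
    (∀ x : ℝ, z₀ < x → 0 < hpjQ a k x) := by
  obtain ⟨m, rfl⟩ : ∃ m, k = m + 2 := ⟨k - 2, by omega⟩
  have hzk : z₀ ≤ (m : ℝ) + 2 := by
    by_contra h
    have := hpjQ_pos_of_ge a ha m z₀ (le_of_lt (not_le.mp h))
    linarith [hq ▸ this]
  constructor
  · intro x hx hxz
    have := hpjQ_key a ha m x z₀ hx hxz hzk
    rw [hq, zero_mul] at this
    nlinarith [pow_pos hz₀ (m + 1)]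
  · intro x hzx
    rcases le_or_gt x ((m : ℝ) + 2) with hle | hgt
    · have := hpjQ_key a ha m z₀ x hz₀ hzx hle
      rw [hq, zero_mul] at this
      nlinarith [pow_pos hz₀ (m + 1)]
    · exact hpjQ_pos_of_ge a ha m x hgt.le
end

section
/- Let k ≥ 2 be an integer, and let Z : (0, ∞) → ℝ be any function such that for every a > 0, Z(a) > 1 and q_{a,k}(Z(a)) = 0, where q_{a,k}(x) = a·x^k − a·x^{k−1} + x − k. Then Z(a) tends to 1 as a tends to +∞. -/
theorem stmt11 (k : ℕ) (hk : 2 ≤ k) (Z : ℝ → ℝ)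
    (hZ : ∀ a : ℝ, 0 < a → 1 < Z a ∧ hpjQ a k (Z a) = 0) :
    Filter.Tendsto Z Filter.atTop (nhds 1) := by
  have key : ∀ a : ℝ, 0 < a → Z a ≤ 1 + k / a := by
    intro a ha
    obtain ⟨h1, h2⟩ := hZ a ha
    set x := Z a with hx
    have hpowk : x ^ k = x ^ (k - 1) * x := by
      rw [← pow_succ]
      congr 1
      omega
    have hfac : a * x ^ (k - 1) * (x - 1) = k - x := by
      unfold hpjQ at h2
      rw [hpowk] at h2
      ring_nf
      ring_nf at h2
      linarith
    have hpow : 1 ≤ x ^ (k - 1) := one_le_pow₀ (le_of_lt h1)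
    have h3 : a * (x - 1) ≤ a * x ^ (k - 1) * (x - 1) := by nlinarith [mul_pos ha (sub_pos.mpr h1)]
    have h5 : a * (x - 1) ≤ k := by nlinarith
    have : x - 1 ≤ k / a := (le_div_iff₀ ha).mpr (by linarith [mul_comm a (x - 1)])
    linarith
  have hupper : Filter.Tendsto (fun a : ℝ => 1 + (k : ℝ) / a) Filter.atTop (nhds 1) := by
    have : Filter.Tendsto (fun a : ℝ => (k : ℝ) / a) Filter.atTop (nhds 0) :=
      tendsto_const_nhds.div_atTop Filter.tendsto_id
    simpa using tendsto_const_nhds.add this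
  refine tendsto_of_tendsto_of_tendsto_of_le_of_le' tendsto_const_nhds hupper ?_ ?_
  · filter_upwards [Filter.eventually_gt_atTop 0] with a ha
    exact le_of_lt (hZ a ha).1
  · filter_upwards [Filter.eventually_gt_atTop 0] with a ha
    exact key a ha
end

section
/- Let k ≥ 2 be an integer, and let Z : (0, ∞) → ℝ be any function such that for every a > 0, Z(a) > 1 and q_{a,k}(Z(a)) = 0, where q_{a,k}(x) = a·x^k − a·x^{k−1} + x − k. Then Z(a) tends to k as a tends to 0 from the right. -/
theorem stmt12 (k : ℕ) (hk : 2 ≤ k) (Z : ℝ → ℝ)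
    (hZ : ∀ a : ℝ, 0 < a → 1 < Z a ∧ hpjQ a k (Z a) = 0) :
    Filter.Tendsto Z (nhdsWithin 0 (Set.Ioi 0)) (nhds (k : ℝ)) := by
  have hkR : (1 : ℝ) < (k : ℝ) := by exact_mod_cast lt_of_lt_of_le one_lt_two hk
  have key : ∀ a : ℝ, 0 < a → (k : ℝ) - a * (k : ℝ) ^ k ≤ Z a ∧ Z a ≤ (k : ℝ) := by
    intro a ha
    obtain ⟨hz1, heq⟩ := hZ a ha
    set z := Z a with hzdef
    have hz0 : 0 < z := lt_trans one_pos hz1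
    have hkey : a * z ^ (k - 1) * (z - 1) = (k : ℝ) - z := by
      have hpow : z ^ k = z ^ (k - 1) * z := by
        rw [← pow_succ, Nat.sub_add_cancel (le_trans one_le_two hk)]
      unfold hpjQ at heq
      rw [hpow] at heq
      ring_nf at heq ⊢
      linarith
    have hpos : 0 < a * z ^ (k - 1) * (z - 1) := by
      apply mul_pos (mul_pos ha (pow_pos hz0 _))
      linarith
    have hzk : z < (k : ℝ) := by linarith [hkey ▸ hpos]
    refine ⟨?_, le_of_lt hzk⟩
    have h1 : z ^ (k - 1) ≤ (k : ℝ) ^ (k - 1) :=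
      pow_le_pow_left₀ (le_of_lt hz0) (le_of_lt hzk) _
    have h2 : a * z ^ (k - 1) * (z - 1) ≤ a * (k : ℝ) ^ (k - 1) * (k : ℝ) := by
      apply mul_le_mul
      · exact mul_le_mul_of_nonneg_left h1 (le_of_lt ha)
      · linarith
      · linarith
      · positivity
    have h3 : a * (k : ℝ) ^ (k - 1) * (k : ℝ) ≤ a * (k : ℝ) ^ k := by
      have : (k : ℝ) ^ (k - 1) * (k : ℝ) = (k : ℝ) ^ k := by
        rw [← pow_succ, Nat.sub_add_cancel (le_trans one_le_two hk)]
      rw [mul_assoc, this]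
    linarith [hkey ▸ h2]
  have hlo : Filter.Tendsto (fun a : ℝ => (k : ℝ) - a * (k : ℝ) ^ k)
      (nhdsWithin 0 (Set.Ioi 0)) (nhds (k : ℝ)) := by
    apply Filter.Tendsto.mono_left _ nhdsWithin_le_nhds
    have : Continuous (fun a : ℝ => (k : ℝ) - a * (k : ℝ) ^ k) := by continuity
    have := this.tendsto 0
    simpa using this
  have hhi : Filter.Tendsto (fun _ : ℝ => (k : ℝ))
      (nhdsWithin 0 (Set.Ioi 0)) (nhds (k : ℝ)) := tendsto_const_nhds
  apply tendsto_of_tendsto_of_tendsto_of_le_of_le' hlo hhi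
  · filter_upwards [self_mem_nhdsWithin] with a ha using (key a ha).1
  · filter_upwards [self_mem_nhdsWithin] with a ha using (key a ha).2
end

section
/- Fix a real number c > 0. For every sequence of natural numbers (m_n), the sequence n ↦ n · [ (c/n)·(1 − c/n)^{n−1} + ∑_{j=2}^{m_n} j · (c/n)^j · (1 − c/n)^{n−j} ] converges to c · e^{−c} as n → ∞ (over natural numbers n with n > c). -/
open Filter Finset

private lemma sum_jxj_le (x : ℝ) (hx0 : 0 ≤ x) (hx : x ≤ 1/2) :
    ∀ M : ℕ, 1 ≤ M →
      ∑ j ∈ Finset.Icc 2 M, (j : ℝ) * x ^ j + 2 * (M + 2) * x ^ (M + 1) ≤ 8 * x ^ 2 := by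
  intro M hM
  induction M, hM using Nat.le_induction with
  | base =>
    simp only [show Finset.Icc 2 1 = (∅ : Finset ℕ) by decide, Finset.sum_empty]
    norm_num
    nlinarith [sq_nonneg x]
  | succ M hM ih =>
    rw [Finset.sum_Icc_succ_top (by omega)]
    set p := x ^ (M + 1) with hp_def
    have hp : (0:ℝ) ≤ p := pow_nonneg hx0 _
    have hxp : x ^ (M + 1 + 1) = p * x := pow_succ x (M+1)
    rw [hxp]
    push_cast
    have h12 : (0:ℝ) ≤ 1 - 2 * x := by linarith
    have hM3 : (0:ℝ) ≤ (M:ℝ) + 3 := by positivity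
    have key : ((M:ℝ) + 1) * p + 2 * ((M:ℝ) + 1 + 2) * (p * x) ≤ 2 * ((M:ℝ) + 2) * p := by
      nlinarith [mul_nonneg (mul_nonneg hp h12) hM3]
    linarith [ih, key]

private lemma sum_le (x : ℝ) (hx0 : 0 ≤ x) (hx : x ≤ 1/2) (M : ℕ) :
    ∑ j ∈ Finset.Icc 2 M, (j : ℝ) * x ^ j ≤ 8 * x ^ 2 := by
  rcases Nat.lt_or_ge M 2 with h | h
  · have : Finset.Icc 2 M = ∅ := by
      apply Finset.Icc_eq_empty; omega
    simp [this]; positivity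
  · have := sum_jxj_le x hx0 hx M (by omega)
    nlinarith [pow_nonneg hx0 (M+1), this]

theorem stmt17 (c : ℝ) (hc : 0 < c) (m : ℕ → ℕ) :
    Filter.Tendsto
      (fun n : ℕ => (n : ℝ) *
        ((c / n) * (1 - c / n) ^ (n - 1) +
          ∑ j ∈ Finset.Icc 2 (m n), (j : ℝ) * (c / n) ^ j * (1 - c / n) ^ (n - j)))
      Filter.atTop (nhds (c * Real.exp (-c))) := by
  -- eventually n > 2c
  have hev : ∀ᶠ n : ℕ in atTop, 2 * c < (n : ℝ) := by
    have := tendsto_natCast_atTop_atTop (R := ℝ)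
    exact this.eventually_gt_atTop (2 * c)
  -- First part: c * (1 - c/n)^(n-1) → c e^{-c}
  have h1 : Tendsto (fun n : ℕ => c * (1 - c / n) ^ (n - 1)) atTop
      (nhds (c * Real.exp (-c))) := by
    have hpow : Tendsto (fun n : ℕ => (1 + (-c) / n) ^ n) atTop (nhds (Real.exp (-c))) :=
      Real.tendsto_one_add_div_pow_exp (-c)
    have hbase : Tendsto (fun n : ℕ => (1 - c / n)) atTop (nhds 1) := by
      have : Tendsto (fun n : ℕ => c / n) atTop (nhds 0) :=
        tendsto_const_div_atTop_nhds_zero_nat c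
      have := this.const_sub 1
      simpa using this
    have hdiv : Tendsto (fun n : ℕ => (1 + (-c) / n) ^ n / (1 - c / n)) atTop
        (nhds (Real.exp (-c) / 1)) := hpow.div hbase one_ne_zero
    rw [div_one] at hdiv
    have heq : ∀ᶠ n : ℕ in atTop,
        (1 + (-c) / n) ^ n / (1 - c / n) = (1 - c / n) ^ (n - 1) := by
      filter_upwards [hev, eventually_ge_atTop 1] with n hn hn1
      have hne : (1 - c / (n:ℝ)) ≠ 0 := by
        have hn0 : (0:ℝ) < n := lt_trans (by linarith) hn
        have : c / n < 1 := (div_lt_one hn0).mpr (by linarith)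
        linarith
      have : (1 + (-c) / (n:ℝ)) = 1 - c / n := by ring
      rw [this]
      have hps : (1 - c / (n:ℝ)) ^ n = (1 - c / (n:ℝ)) ^ (n - 1) * (1 - c / n) := by
        rw [← pow_succ]; congr 1; omega
      rw [hps, mul_div_assoc, div_self hne, mul_one]
    exact ((hdiv.congr' heq).const_mul c).congr (fun n => rfl)
  -- Second part: n * sum → 0
  have h2 : Tendsto (fun n : ℕ => (n : ℝ) *
      ∑ j ∈ Finset.Icc 2 (m n), (j : ℝ) * (c / n) ^ j * (1 - c / n) ^ (n - j)) atTop
      (nhds 0) := by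
    apply squeeze_zero' (g := fun n : ℕ => 8 * c ^ 2 / n)
    · filter_upwards [hev] with n hn
      have hn0 : (0:ℝ) < n := lt_trans (by linarith) hn
      have hx0 : (0:ℝ) ≤ c / n := le_of_lt (div_pos hc hn0)
      have hx1 : c / (n:ℝ) ≤ 1 := by
        rw [div_le_one hn0]; linarith
      apply mul_nonneg (le_of_lt hn0)
      apply Finset.sum_nonneg
      intro j hj
      have : (0:ℝ) ≤ 1 - c / n := by linarith
      positivity
    · filter_upwards [hev] with n hn
      have hn0 : (0:ℝ) < n := lt_trans (by linarith) hn
      set x := c / (n:ℝ) with hxdef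
      have hx0 : (0:ℝ) ≤ x := le_of_lt (div_pos hc hn0)
      have hxhalf : x ≤ 1/2 := by
        rw [hxdef, div_le_div_iff₀ hn0 (by norm_num)]
        linarith
      have hb0 : (0:ℝ) ≤ 1 - x := by linarith
      have hb1 : 1 - x ≤ 1 := by linarith
      have hterm : ∑ j ∈ Finset.Icc 2 (m n), (j : ℝ) * x ^ j * (1 - x) ^ (n - j)
          ≤ ∑ j ∈ Finset.Icc 2 (m n), (j : ℝ) * x ^ j := by
        apply Finset.sum_le_sum
        intro j hj
        have hle : (1 - x) ^ (n - j) ≤ 1 := pow_le_one₀ hb0 hb1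
        have hjx : (0:ℝ) ≤ (j:ℝ) * x ^ j := by positivity
        calc (j : ℝ) * x ^ j * (1 - x) ^ (n - j) ≤ (j:ℝ) * x ^ j * 1 :=
              mul_le_mul_of_nonneg_left hle hjx
          _ = (j:ℝ) * x ^ j := mul_one _
      have hsum := sum_le x hx0 hxhalf (m n)
      have : (n:ℝ) * ∑ j ∈ Finset.Icc 2 (m n), (j : ℝ) * x ^ j * (1 - x) ^ (n - j)
          ≤ (n:ℝ) * (8 * x ^ 2) := by
        apply mul_le_mul_of_nonneg_left (le_trans hterm hsum) (le_of_lt hn0)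
      refine le_trans this (le_of_eq ?_)
      rw [hxdef]
      field_simp
    · exact tendsto_const_div_atTop_nhds_zero_nat (8 * c ^ 2)
  have := h1.add h2
  rw [add_zero] at this
  apply this.congr'
  filter_upwards [hev] with n hn
  have hn0 : (0:ℝ) < n := lt_trans (by linarith) hn
  have hne : (n:ℝ) ≠ 0 := ne_of_gt hn0
  field_simp
end
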